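/- In the metric space of continuous maps [0,1] → [0,1] with the sup metric, let P be the set of all zigzag paths and, for each natural number n, let Pₙ be the set of zigzag paths of length n. Then each Pₙ is open in the subspace P; equivalently, the length function P → ℕ is locally constant (continuous). (Step (b) of the proof of Theorem 1.7.) -/
import Mathlib


open Set unitInterval

/-- A continuous map `b : [0,1] → [0,1]` (here an element of `C([0,1], ℝ)` with values in
`[0,1]`) is a *zigzag path of length `n`* (see Context). -/
def IsZigzagC (b : C(unitInterval, ℝ)) (n : ℕ) : Prop :=
  (∀ s, b s ∈ Icc (0:ℝ) 1) ∧
  ((n = 0 ∧ ∀ s, b s = 0) ∨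
   (1 ≤ n ∧ ∃ t : ℕ → unitInterval, t 0 = 0 ∧ t n = 1 ∧
     (∀ i < n, t i < t (i + 1)) ∧
     (∀ i ≤ n, b (t i) = if Odd i then 1 else 0) ∧
     (∀ i, 1 ≤ i → i ≤ n →
       if Odd i then MonotoneOn b (Icc (t (i - 1)) (t i))
       else AntitoneOn b (Icc (t (i - 1)) (t i)))))

lemma zig_le {b b' : C(unitInterval, ℝ)} {n m : ℕ} (hn : 1 ≤ n) (hm : 1 ≤ m)
    (hb : IsZigzagC b n) (hb' : IsZigzagC b' m) (hd : dist b b' < 1/2) : n ≤ m := by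
  classical
  obtain ⟨-, hb⟩ := hb
  rcases hb with ⟨h0, -⟩ | ⟨-, t, ht0, ht1, htlt, htval, -⟩
  · omega
  obtain ⟨-, hb'⟩ := hb'
  rcases hb' with ⟨h0, -⟩ | ⟨-, s, hs0, hs1, hslt, -, hsmono⟩
  · omega
  -- values of b' at the points t i
  have hb'val : ∀ i ≤ n, if Odd i then 1/2 < b' (t i) else b' (t i) < 1/2 := by
    intro i hi
    have h1 : dist (b (t i)) (b' (t i)) ≤ dist b b' := ContinuousMap.dist_apply_le_dist _
    have h2 : |b (t i) - b' (t i)| < 1/2 := by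
      rw [← Real.dist_eq]; linarith
    have h3 := htval i hi
    by_cases hodd : Odd i
    · simp only [hodd, if_true] at h3 ⊢
      rw [h3] at h2
      cases abs_lt.mp h2; linarith
    · simp only [hodd, if_false] at h3 ⊢
      rw [h3] at h2
      cases abs_lt.mp h2; linarith
  -- existence of a piece containing t i
  have hex : ∀ i : ℕ, ∃ k, t i ≤ s (k + 1) := by
    intro i
    refine ⟨m - 1, ?_⟩
    have : m - 1 + 1 = m := by omega
    rw [this, hs1]
    exact le_one'
  set j : ℕ → ℕ := fun i => Nat.find (hex i) with hj
  have hjspec : ∀ i, t i ≤ s (j i + 1) := fun i => Nat.find_spec (hex i)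
  have hjle : ∀ i, j i ≤ m - 1 := by
    intro i
    apply Nat.find_min' (hex i)
    have : m - 1 + 1 = m := by omega
    rw [this, hs1]
    exact le_one'
  have hjmono : ∀ i < n, j i ≤ j (i + 1) := by
    intro i hi
    apply Nat.find_min' (hex i)
    exact le_trans (le_of_lt (htlt i hi)) (hjspec (i+1))
  -- parity claim when consecutive points are in the same piece
  have hparity : ∀ i, 1 ≤ i → i ≤ n → j (i - 1) = j i → (Odd i ↔ Odd (j i + 1)) := by
    intro i h1 h2 heq
    have hi1 : i - 1 < n := by omega
    have hlt : t (i - 1) < t i := by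
      have := htlt (i - 1) hi1
      rwa [Nat.sub_add_cancel h1] at this
    have hlow : s (j i) ≤ t (i - 1) := by
      rcases Nat.eq_zero_or_pos (j i) with h | h
      · rw [h, hs0]; exact nonneg'
      · have hmin := Nat.find_min (hex (i - 1)) (by omega : j i - 1 < j (i - 1))
        have : j i - 1 + 1 = j i := by omega
        rw [this] at hmin
        exact le_of_not_ge hmin
    have hup1 : t (i - 1) ≤ s (j i + 1) := heq ▸ hjspec (i - 1)
    have hup2 : t i ≤ s (j i + 1) := hjspec i
    have hmem1 : t (i - 1) ∈ Icc (s (j i)) (s (j i + 1)) := ⟨hlow, hup1⟩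
    have hmem2 : t i ∈ Icc (s (j i)) (s (j i + 1)) :=
      ⟨le_trans hlow (le_of_lt hlt), hup2⟩
    have hkm : j i + 1 ≤ m := by have := hjle i; omega
    have hmono := hsmono (j i + 1) (by omega) hkm
    have hvi := hb'val i h2
    have hvi1 := hb'val (i - 1) (by omega)
    have hoddswap : Odd (i - 1) ↔ ¬ Odd i := by
      rw [Nat.odd_iff, Nat.odd_iff]
      omega
    by_cases hJ : Odd (j i + 1)
    · simp only [hJ, if_true] at hmono
      have hle := hmono hmem1 hmem2 (le_of_lt hlt)
      constructor
      · intro _; exact hJ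
      · intro _
        by_contra hni
        have ho1 : Odd (i - 1) := hoddswap.mpr hni
        simp only [ho1, if_true] at hvi1
        simp only [hni, if_false] at hvi
        linarith
    · simp only [hJ, if_false] at hmono
      have hle := hmono hmem1 hmem2 (le_of_lt hlt)
      constructor
      · intro hoi
        exfalso
        have ho1 : ¬ Odd (i - 1) := fun h => (hoddswap.mp h) hoi
        simp only [ho1, if_false] at hvi1
        simp only [hoi, if_true] at hvi
        linarith
      · intro h; exact absurd h hJ
  -- main induction
  have main : ∀ i, i ≤ n → i ≤ j i + 1 := by
    intro i
    induction i with
    | zero => intro _; omega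
    | succ i ih =>
      intro h
      have h1 := ih (by omega)
      have h2 := hjmono i (by omega)
      rcases lt_or_eq_of_le h2 with h3 | h3
      · omega
      · have hp := hparity (i + 1) (by omega) h (by simpa using h3)
        by_contra hc
        have : i = j (i + 1) + 1 := by omega
        rw [← this] at hp
        rw [Nat.odd_iff, Nat.odd_iff] at hp
        omega
  have := main n le_rfl
  have := hjle n
  omega

lemma zig_eq {b b' : C(unitInterval, ℝ)} {n m : ℕ}
    (hb : IsZigzagC b n) (hb' : IsZigzagC b' m) (hd : dist b b' < 1/2) : n = m := by
  have key : ∀ (c c' : C(unitInterval, ℝ)) (p q : ℕ), IsZigzagC c p → IsZigzagC c' q →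
      dist c c' < 1/2 → p = 0 → q = 0 := by
    intro c c' p q hc hc' hdist hp
    by_contra hq
    obtain ⟨-, hc2⟩ := hc
    rcases hc2 with ⟨-, h0⟩ | ⟨h1, -⟩
    swap; · omega
    obtain ⟨-, hc'2⟩ := hc'
    rcases hc'2 with ⟨h1, -⟩ | ⟨-, s, -, -, -, hsval, -⟩
    · omega
    have hv : c' (s 1) = 1 := by
      have := hsval 1 (by omega)
      simpa using this
    have h2 : dist (c (s 1)) (c' (s 1)) ≤ dist c c' := ContinuousMap.dist_apply_le_dist _
    rw [h0, hv, Real.dist_eq] at h2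
    simp at h2
    linarith
  rcases Nat.eq_zero_or_pos n with hn | hn
  · exact (hn.trans (key b b' n m hb hb' hd hn).symm)
  rcases Nat.eq_zero_or_pos m with hm | hm
  · exact absurd (key b' b m n hb' hb (by rwa [dist_comm]) hm) (by omega)
  exact le_antisymm (zig_le hn hm hb hb' hd) (zig_le hm hn hb' hb (by rwa [dist_comm]))

/-- In the space of continuous maps `[0,1] → ℝ` with the sup metric, the set `Pₙ` of
zigzag paths of length `n` is open in the subspace `P` of all zigzag paths; i.e.
the length function is locally constant. (Step (b) of the proof of Theorem 1.7.) -/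
theorem zigzag_length_locallyConstant (n : ℕ) :
    IsOpen {b : {f : C(unitInterval, ℝ) // ∃ m, IsZigzagC f m} | IsZigzagC b.1 n} := by
  rw [Metric.isOpen_iff]
  rintro ⟨b, m, hbm⟩ hb
  refine ⟨1/2, by norm_num, ?_⟩
  rintro ⟨b', m', hbm'⟩ hdist
  simp only [Metric.mem_ball, Subtype.dist_eq] at hdist
  simp only [Set.mem_setOf_eq] at hb
  have : m' = n := zig_eq hbm' hb hdist
  simpa [Set.mem_setOf_eq, ← this] using hbm'
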